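/- arXiv:2204.01484 — 2 statements merged into one kernel-verified Lean document; each statement's English description precedes it below -/
import Mathlib

section
/- For real a with 0 < a < 1 and b, T > 0, the truncated integral (1/(2πi)) ∫_{b−iT}^{b+iT} aˢ/(s(s+1)) ds equals R₂, where |R₂| ≪ a^b · min(1/T, 1/(T² |log a|)). -/
/-!
The integrand a^s/(s(s+1)) is holomorphic on Re s > 0, so the segment Re s = b may be moved to
Re s = X for any X ≥ b, at the cost of two horizontal segments at height ±T, on which
|a^s/(s(s+1))| ≤ a^(Re s)/T². On the new vertical segment the integrand is at most a^X/T² once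
X ≥ T. Taking X = b + T gives the bound 4 a^b/T; letting X → ∞ (so a^X → 0) and using
∫_b^∞ a^x dx = a^b/|log a| gives 2 a^b/(T² |log a|).
-/

open Complex Set Filter Topology

lemma integral_const_rpow {a : ℝ} (ha : 0 < a) (ha1 : a ≠ 1) (b X : ℝ) :
    ∫ x in b..X, a ^ x = (a ^ X - a ^ b) / Real.log a := by
  have hlog : Real.log a ≠ 0 := Real.log_ne_zero_of_pos_of_ne_one ha ha1
  rw [sub_div]
  refine intervalIntegral.integral_eq_sub_of_hasDerivAt (f := fun x => a ^ x / Real.log a)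
    (fun x _ => ?_) ((Real.continuous_const_rpow ha.ne').intervalIntegrable _ _)
  simpa [hlog] using (Real.hasStrictDerivAt_const_rpow ha x).hasDerivAt.div_const (Real.log a)

lemma integral_const_rpow_le_div_abs_log {a : ℝ} (ha : 0 < a) (ha1 : a < 1) (b X : ℝ) :
    ∫ x in b..X, a ^ x ≤ a ^ b / |Real.log a| := by
  have hlog := Real.log_neg ha ha1
  rw [integral_const_rpow ha ha1.ne, abs_of_neg hlog, ← neg_div_neg_eq, neg_sub]
  gcongr
  · linarith
  · linarith [Real.rpow_pos_of_pos ha X]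

lemma integral_const_rpow_le_mul {a : ℝ} (ha : 0 < a) (ha1 : a ≤ 1) {b X : ℝ} (hbX : b ≤ X) :
    ∫ x in b..X, a ^ x ≤ (X - b) * a ^ b := by
  calc _ ≤ ∫ _ in b..X, a ^ b :=
        intervalIntegral.integral_mono_on hbX
          ((Real.continuous_const_rpow ha.ne').intervalIntegrable _ _) intervalIntegrable_const
          fun x hx => Real.rpow_le_rpow_of_exponent_ge ha ha1 hx.1
    _ = (X - b) * a ^ b := by simp

noncomputable def perronKernel (a : ℝ) (s : ℂ) : ℂ := (a : ℂ) ^ s / (s * (s + 1))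

namespace perronKernel

variable {a b T : ℝ}

lemma differentiableOn (ha : a ≠ 0) : DifferentiableOn ℂ (perronKernel a) {s | 0 < s.re} := by
  intro s (hs : 0 < s.re)
  have hs0 : s ≠ 0 := fun h => by simp [h] at hs
  have hs1 : s + 1 ≠ 0 := fun h => by
    have := congrArg re h
    simp only [add_re, one_re, zero_re] at this
    linarith
  exact ((differentiableAt_id.const_cpow (Or.inl (ofReal_ne_zero.mpr ha))).div
    (differentiableAt_id.mul (differentiableAt_id.add_const 1))
    (mul_ne_zero hs0 hs1)).differentiableWithinAt

lemma norm_le (ha : 0 < a) {s : ℂ} (hT : 0 < T) (hs : T ≤ ‖s‖) (hs1 : T ≤ ‖s + 1‖) :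
    ‖perronKernel a s‖ ≤ a ^ s.re / T ^ 2 := by
  rw [perronKernel, norm_div, norm_mul, norm_cpow_eq_rpow_re_of_pos ha, sq]
  gcongr

lemma norm_le_of_im (ha : 0 < a) {s : ℂ} (hs : s.im ≠ 0) :
    ‖perronKernel a s‖ ≤ a ^ s.re / s.im ^ 2 := by
  rw [← sq_abs]
  refine norm_le ha (abs_pos.mpr hs) (abs_im_le_norm s) ?_
  simpa using abs_im_le_norm (s + 1)

lemma norm_le_of_re (ha : 0 < a) {s : ℂ} (hT : 0 < T) (hs : T ≤ s.re) :
    ‖perronKernel a s‖ ≤ a ^ s.re / T ^ 2 :=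
  norm_le ha hT (hs.trans (re_le_norm s)) ((hs.trans (by simp)).trans (re_le_norm (s + 1)))

lemma integral_vertical_eq (ha : a ≠ 0) {X : ℝ} (hb : 0 < b) (hbX : b ≤ X) (T : ℝ) :
    I * ∫ y in (-T)..T, perronKernel a (b + y * I) =
      (∫ x in b..X, perronKernel a (x + -T * I)) - (∫ x in b..X, perronKernel a (x + T * I)) +
        I * ∫ y in (-T)..T, perronKernel a (X + y * I) := by
  have H := integral_boundary_rect_eq_zero_of_differentiableOn (perronKernel a)
    ⟨b, -T⟩ ⟨X, T⟩ <| (differentiableOn ha).mono fun s hs =>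
      hb.trans_le (uIcc_of_le hbX ▸ hs.1).1
  simp only [smul_eq_mul, ofReal_neg] at H
  linear_combination -H

lemma norm_integral_horizontal_le (ha : 0 < a) {X c : ℝ} (hbX : b ≤ X) (hc : c ≠ 0) :
    ‖∫ x in b..X, perronKernel a (x + c * I)‖ ≤ (∫ x in b..X, a ^ x) / c ^ 2 := by
  rw [← intervalIntegral.integral_div]
  refine intervalIntegral.norm_integral_le_of_norm_le hbX
    (MeasureTheory.ae_of_all _ fun x _ => ?_)
    (((Real.continuous_const_rpow ha.ne').div_const _).intervalIntegrable _ _)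
  simpa using norm_le_of_im ha (s := x + c * I) (by simpa using hc)

lemma norm_integral_vertical_le (ha : 0 < a) {X : ℝ} (hT : 0 < T) (hTX : T ≤ X) :
    ‖∫ y in (-T)..T, perronKernel a (X + y * I)‖ ≤ 2 * a ^ X / T := by
  have h := intervalIntegral.norm_integral_le_of_norm_le_const (a := -T) (b := T)
    (C := a ^ X / T ^ 2) fun y _ => by
      simpa using norm_le_of_re ha hT (s := X + y * I) (by simpa using hTX)
  calc _ ≤ a ^ X / T ^ 2 * |T - -T| := h
    _ = 2 * a ^ X / T := by
      rw [abs_of_nonneg (by linarith)]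
      field_simp
      ring

lemma norm_integral_vertical_le_of_shift (ha : 0 < a) {X : ℝ} (hb : 0 < b) (hT : 0 < T)
    (hbX : b ≤ X) (hTX : T ≤ X) :
    ‖∫ y in (-T)..T, perronKernel a (b + y * I)‖ ≤
      2 * (∫ x in b..X, a ^ x) / T ^ 2 + 2 * a ^ X / T := by
  have hshift := congrArg norm (integral_vertical_eq ha.ne' hb hbX T)
  have hlow := norm_integral_horizontal_le ha hbX (neg_ne_zero.mpr hT.ne')
  have hup := norm_integral_horizontal_le ha hbX hT.ne'
  have hright := norm_integral_vertical_le ha hT hTX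
  rw [norm_mul, norm_I, one_mul] at hshift
  rw [ofReal_neg, neg_sq] at hlow
  rw [hshift]
  calc _ ≤ ‖∫ x in b..X, perronKernel a (x + -T * I)‖ + ‖∫ x in b..X, perronKernel a (x + T * I)‖
        + ‖I * ∫ y in (-T)..T, perronKernel a (X + y * I)‖ :=
        (norm_add_le _ _).trans (by gcongr; exact norm_sub_le _ _)
    _ ≤ _ := by
      rw [norm_mul, norm_I, one_mul, mul_div_assoc]
      linarith

lemma norm_integral_vertical_le_div (ha : 0 < a) (ha1 : a ≤ 1) (hb : 0 < b) (hT : 0 < T) :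
    ‖∫ y in (-T)..T, perronKernel a (b + y * I)‖ ≤ 4 * a ^ b / T := by
  have hint := integral_const_rpow_le_mul ha ha1 (le_add_of_nonneg_right hT.le) (b := b)
  have hdecay : a ^ (b + T) ≤ a ^ b := Real.rpow_le_rpow_of_exponent_ge ha ha1 (by linarith)
  calc _ ≤ _ := norm_integral_vertical_le_of_shift ha hb hT (X := b + T) (by linarith)
          (by linarith)
    _ ≤ 2 * ((b + T - b) * a ^ b) / T ^ 2 + 2 * a ^ b / T := by gcongr
    _ = 4 * a ^ b / T := by field_simp; ring

lemma norm_integral_vertical_le_div_log (ha : 0 < a) (ha1 : a < 1) (hb : 0 < b) (hT : 0 < T) :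
    ‖∫ y in (-T)..T, perronKernel a (b + y * I)‖ ≤ 2 * a ^ b / (T ^ 2 * |Real.log a|) := by
  have hlim : Tendsto (fun X : ℝ => 2 * (a ^ b / |Real.log a|) / T ^ 2 + 2 * a ^ X / T) atTop
      (𝓝 (2 * a ^ b / (T ^ 2 * |Real.log a|))) := by
    convert ((tendsto_rpow_atTop_of_base_lt_one a (by linarith) ha1).const_mul 2
      |>.div_const T).const_add (2 * (a ^ b / |Real.log a|) / T ^ 2) using 2
    ring
  refine ge_of_tendsto hlim ((eventually_ge_atTop (max b T)).mono fun X hX => ?_)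
  calc _ ≤ _ := norm_integral_vertical_le_of_shift ha hb hT (le_of_max_le_left hX)
          (le_of_max_le_right hX)
    _ ≤ _ := by gcongr; exact integral_const_rpow_le_div_abs_log ha ha1 b X

lemma norm_integral_vertical_le_min (ha : 0 < a) (ha1 : a < 1) (hb : 0 < b) (hT : 0 < T) :
    ‖∫ y in (-T)..T, perronKernel a (b + y * I)‖ ≤
      4 * (a ^ b * min (1 / T) (1 / (T ^ 2 * |Real.log a|))) := by
  have hab : 0 < a ^ b := Real.rpow_pos_of_pos ha b
  have hlog : 0 < T ^ 2 * |Real.log a| :=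
    mul_pos (by positivity) (abs_pos.mpr (Real.log_neg ha ha1).ne)
  rw [mul_min_of_nonneg _ _ hab.le, mul_min_of_nonneg _ _ (by norm_num)]
  refine le_min ((norm_integral_vertical_le_div ha ha1.le hb hT).trans_eq (by ring)) ?_
  calc _ ≤ 2 * a ^ b / (T ^ 2 * |Real.log a|) := norm_integral_vertical_le_div_log ha ha1 hb hT
    _ ≤ 4 * (a ^ b * (1 / (T ^ 2 * |Real.log a|))) := by
      rw [mul_one_div, ← mul_div_assoc]
      gcongr
      norm_num

end perronKernel

theorem stmt_3 :
    ∃ C > 0, ∀ a b T : ℝ, 0 < a → a < 1 → 0 < b → 0 < T →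
      ∃ R₂ : ℂ,
        (1 / (2 * Real.pi * Complex.I)) *
            ∫ t in (-T)..T,
              (a : ℂ) ^ ((b : ℂ) + t * Complex.I) /
                  (((b : ℂ) + t * Complex.I) * ((b : ℂ) + t * Complex.I + 1)) * Complex.I
          = R₂ ∧
        ‖R₂‖ ≤ C * a ^ b * min (1 / T) (1 / (T ^ 2 * |Real.log a|)) := by
  refine ⟨1, one_pos, fun a b T ha ha1 hb hT => ⟨_, rfl, ?_⟩⟩
  have hprefactor : ‖1 / (2 * (Real.pi : ℂ) * I)‖ = 1 / (2 * Real.pi) := by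
    simp [abs_of_pos Real.pi_pos]
  rw [intervalIntegral.integral_mul_const, norm_mul, norm_mul, norm_I, mul_one, hprefactor,
    one_mul]
  calc _ ≤ 1 / (2 * Real.pi) * (4 * (a ^ b * min (1 / T) (1 / (T ^ 2 * |Real.log a|)))) := by
        gcongr
        exact perronKernel.norm_integral_vertical_le_min ha ha1 hb hT
    _ ≤ _ := by
      rw [← mul_assoc]
      refine mul_le_of_le_one_left (by positivity) ?_
      rw [div_mul_eq_mul_div, one_mul, div_le_one (by positivity)]
      linarith [Real.pi_gt_three]
end

section
/- For positive integers i ≥ 1 and n ≥ 2, the weights a_{n,j}^{(i)} = C(n+i−j, i)/C(n+i−1, i) satisfy a_{n,j}^{(i)} − a_{n−1,j}^{(i)} = C(n+i−j,i)/C(n+i−1,i) − C(n−1+i−j,i)/C(n+i−2,i) = (1/(i+1)) · (j−1) · C(n+i−1−j, i−1)/C(n+i−1, i+1) for 1 ≤ j ≤ n. -/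
theorem stmt_12 (i n j : ℕ) (hi : 1 ≤ i) (hn : 2 ≤ n) (hj1 : 1 ≤ j) (hjn : j ≤ n) :
    ((n + i - j).choose i : ℝ) / ((n + i - 1).choose i : ℝ)
        - ((n - 1 + i - j).choose i : ℝ) / ((n + i - 2).choose i : ℝ)
      = (1 / ((i : ℝ) + 1)) * ((j : ℝ) - 1) *
          (((n + i - 1 - j).choose (i - 1) : ℝ) / ((n + i - 1).choose (i + 1) : ℝ)) := by
  set m := n + i - j with hm
  have hm1 : n - 1 + i - j = m - 1 := by omega
  have hm2 : n + i - 1 - j = m - 1 := by omega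
  have hmi : i ≤ m := by omega
  rw [hm1, hm2]
  -- Pascal: C(m,i) = C(m-1,i-1) + C(m-1,i)
  have e1 : m.choose i = (m-1).choose (i-1) + (m-1).choose i := by
    have : (m-1+1).choose (i-1+1) = (m-1).choose (i-1) + (m-1).choose (i-1+1) :=
      Nat.choose_succ_succ' (m-1) (i-1)
    have h1 : m-1+1 = m := by omega
    have h2 : i-1+1 = i := by omega
    rwa [h1, h2] at this
  -- C(m-1,i)*i = C(m-1,i-1)*(n-j)
  have e2 : (m-1).choose i * i = (m-1).choose (i-1) * (n - j) := by
    have := Nat.choose_succ_right_eq (m-1) (i-1)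
    have h2 : i-1+1 = i := by omega
    have h3 : m - 1 - (i-1) = n - j := by omega
    rwa [h2, h3] at this
  -- C(n+i-2,i)*(n+i-1) = C(n+i-1,i)*(n-1)
  have e3 : (n+i-2).choose i * (n+i-1) = (n+i-1).choose i * (n-1) := by
    have := Nat.choose_mul_succ_eq (n+i-2) i
    have h1 : n+i-2+1 = n+i-1 := by omega
    have h2 : n+i-2+1-i = n-1 := by omega
    rw [h1] at this
    rwa [show n+i-1-i = n-1 by omega] at this
  -- C(n+i-1,i+1)*(i+1) = C(n+i-1,i)*(n-1)
  have e4 : (n+i-1).choose (i+1) * (i+1) = (n+i-1).choose i * (n-1) := by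
    have := Nat.choose_succ_right_eq (n+i-1) i
    have h1 : n+i-1-i = n-1 := by omega
    rwa [h1] at this
  -- positivity
  have p1 : 0 < (n+i-1).choose i := Nat.choose_pos (by omega)
  have p2 : 0 < (n+i-2).choose i := Nat.choose_pos (by omega)
  have p3 : 0 < (n+i-1).choose (i+1) := Nat.choose_pos (by omega)
  -- cast to ℝ
  have r1 : (m.choose i : ℝ) = ((m-1).choose (i-1) : ℝ) + ((m-1).choose i : ℝ) := by
    exact_mod_cast congrArg (Nat.cast : ℕ → ℝ) e1
  have r2 : ((m-1).choose i : ℝ) * i = ((m-1).choose (i-1) : ℝ) * ((n:ℝ) - j) := by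
    have := congrArg (Nat.cast : ℕ → ℝ) e2
    rw [Nat.cast_mul, Nat.cast_mul, Nat.cast_sub hjn] at this
    push_cast at this
    linarith [this]
  have r3 : ((n+i-2).choose i : ℝ) * ((n:ℝ)+i-1) = ((n+i-1).choose i : ℝ) * ((n:ℝ)-1) := by
    have := congrArg (Nat.cast : ℕ → ℝ) e3
    push_cast at this
    rw [Nat.cast_sub (by omega : 1 ≤ n+i), Nat.cast_sub (by omega : 1 ≤ n)] at this
    push_cast at this
    linarith [this]
  have r4 : ((n+i-1).choose (i+1) : ℝ) * ((i:ℝ)+1) = ((n+i-1).choose i : ℝ) * ((n:ℝ)-1) := by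
    have := congrArg (Nat.cast : ℕ → ℝ) e4
    rw [Nat.cast_mul, Nat.cast_mul, Nat.cast_sub (by omega : 1 ≤ n)] at this
    push_cast at this
    linarith [this]
  have d1 : ((n+i-1).choose i : ℝ) ≠ 0 := by positivity
  have d2 : ((n+i-2).choose i : ℝ) ≠ 0 := by exact_mod_cast p2.ne'
  have d3 : ((n+i-1).choose (i+1) : ℝ) ≠ 0 := by exact_mod_cast p3.ne'
  have hn1 : (n:ℝ) - 1 ≠ 0 := by
    have : (2:ℝ) ≤ n := by exact_mod_cast hn
    linarith
  have hi1 : (i:ℝ) + 1 ≠ 0 := by positivity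
  have hni : (n:ℝ) + i - 1 ≠ 0 := by
    have : (2:ℝ) ≤ n := by exact_mod_cast hn
    have : (0:ℝ) ≤ i := by positivity
    linarith
  field_simp
  linear_combination ((m.choose i : ℝ) * ((n+i-2).choose i : ℝ) - ((n+i-1).choose i : ℝ) * (((m-1)).choose i : ℝ)) * r4
    + (((m-1)).choose i : ℝ) * ((n+i-1).choose i : ℝ) * r3
    + ((n+i-1).choose i : ℝ) * ((n+i-2).choose i : ℝ) * (((n:ℝ)-1) * r1 - r2)
end
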